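/- In an ordered groupoid, if the pseudoproducts x ⊗ (y ⊗ z) and (x ⊗ y) ⊗ z both exist, then they are equal. -/

import Mathlib

/-- An algebraic groupoid: a type with an everywhere-defined multiplication which is
only required to behave well on composable pairs (`d x = r y`), together with
inversion and domain/range maps (valued in the identities of the groupoid). -/
class Groupoid' (G : Type*) where
  mul : G → G → G
  inv : G → G
  d : G → G
  r : G → G
  r_d : ∀ x : G, r (d x) = d x
  d_r : ∀ x : G, d (r x) = r x
  mul_assoc : ∀ x y z : G, d x = r y → d y = r z → mul (mul x y) z = mul x (mul y z)
  d_mul : ∀ x y : G, d x = r y → d (mul x y) = d y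
  r_mul : ∀ x y : G, d x = r y → r (mul x y) = r x
  mul_d : ∀ x : G, mul x (d x) = x
  r_mul_cancel : ∀ x : G, mul (r x) x = x
  mul_inv : ∀ x : G, mul x (inv x) = r x
  inv_mul : ∀ x : G, mul (inv x) x = d x
  d_inv : ∀ x : G, d (inv x) = r x
  r_inv : ∀ x : G, r (inv x) = d x

open Groupoid'
open scoped Classical

/-- An element is an identity of the groupoid if it is its own domain. -/
def IsId {G : Type*} [Groupoid' G] (e : G) : Prop := d e = e

/-- An ordered groupoid: axioms (OG1), (OG2) and (OG3) (restriction exists uniquely). -/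
class OrderedGroupoid (G : Type*) [Groupoid' G] [PartialOrder G] : Prop where
  og1 : ∀ x y : G, x ≤ y → inv x ≤ inv y
  og2 : ∀ x y u v : G, x ≤ y → u ≤ v → d x = r u → d y = r v → mul x u ≤ mul y v
  og3 : ∀ x e : G, IsId e → e ≤ d x → ∃! z : G, z ≤ x ∧ d z = e


/-- The restriction `(x | e)` of `x` to an identity `e ≤ d x`: the unique element
below `x` with domain `e` (junk value `x` if undefined). -/
noncomputable def res {G : Type*} [Groupoid' G] [PartialOrder G] [OrderedGroupoid G]
    (x e : G) : G :=
  if h : IsId e ∧ e ≤ d x then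
    Classical.choose (OrderedGroupoid.og3 x e h.1 h.2).exists
  else x

/-- The corestriction `(e | x)` of `x` to an identity `e ≤ r x`. -/
noncomputable def cores {G : Type*} [Groupoid' G] [PartialOrder G] [OrderedGroupoid G]
    (e x : G) : G :=
  inv (res (inv x) e)


/-- `e` is the meet of the identities `a` and `b` in the poset of identities. -/
def IsMeetId {G : Type*} [Groupoid' G] [PartialOrder G] (e a b : G) : Prop :=
  IsId e ∧ e ≤ a ∧ e ≤ b ∧ ∀ f : G, IsId f → f ≤ a → f ≤ b → f ≤ e

/-- The pseudoproduct `x ⊗ y` is defined when `d x ∧ r y` exists. -/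
def PsDefined {G : Type*} [Groupoid' G] [PartialOrder G] (x y : G) : Prop :=
  ∃ e : G, IsMeetId e (d x) (r y)

/-- The pseudoproduct `x ⊗ y = (x | e)(e | y)` where `e = d x ∧ r y`
(junk value `x` when undefined). -/
noncomputable def pseudo {G : Type*} [Groupoid' G] [PartialOrder G] [OrderedGroupoid G]
    (x y : G) : G :=
  if h : PsDefined x y then
    mul (res x (Classical.choose h)) (cores (Classical.choose h) y)
  else x

/-!
Put `e₁ = d y ∧ r z`, `e₂ = d x ∧ r (y ⊗ z)`, `e₃ = d x ∧ r y` and `e₄ = d (x ⊗ y) ∧ r z`.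
Restriction and corestriction distribute over composable products, which expands the two sides
to `(x | e₂) · m · (d m | z)` and `(x | r m') · m' · (e₄ | z)`, where `m = (e₂ | (y | e₁))` and
`m' = ((e₃ | y) | e₄)`. Both `m` and `m'` lie below `y`, and elements below a common element are
ordered by their domains, and equally by their ranges. The meet properties give
`d m ≤ e₄ = d m'` and `r m' ≤ e₂ = r m`, hence `m = m'`, and associativity finishes.
-/

section Groupoid

variable {G : Type*} [Groupoid' G]

lemma isId_r (x : G) : IsId (r x) := d_r x

lemma isId_d (x : G) : IsId (d x) := by
  rw [IsId, ← r_d x, d_r]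

lemma inv_inv' (x : G) : inv (inv x) = x :=
  calc inv (inv x) = mul (inv (inv x)) (mul (inv x) x) := by
        rw [inv_mul, ← r_inv, ← d_inv, mul_d]
    _ = mul (mul (inv (inv x)) (inv x)) x := (mul_assoc _ _ _ (d_inv _) (d_inv x)).symm
    _ = x := by rw [inv_mul, d_inv, r_mul_cancel]

end Groupoid

lemma IsMeetId.unique {G : Type*} [Groupoid' G] [PartialOrder G] {e f a b : G}
    (he : IsMeetId e a b) (hf : IsMeetId f a b) : e = f :=
  le_antisymm (hf.2.2.2 e he.1 he.2.1 he.2.2.1) (he.2.2.2 f hf.1 hf.2.1 hf.2.2.1)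

section Ordered

variable {G : Type*} [Groupoid' G] [PartialOrder G] [OrderedGroupoid G]

lemma d_mono : Monotone (d : G → G) := fun x y h => by
  simpa only [inv_mul] using
    OrderedGroupoid.og2 _ _ x y (OrderedGroupoid.og1 x y h) h (d_inv x) (d_inv y)

lemma r_mono : Monotone (r : G → G) := fun x y h => by
  simpa only [Groupoid'.mul_inv] using
    OrderedGroupoid.og2 x y _ _ h (OrderedGroupoid.og1 x y h) (r_inv x).symm (r_inv y).symm

lemma res_le (x : G) {e : G} (he : IsId e) (hle : e ≤ d x) : res x e ≤ x := by
  rw [res, dif_pos ⟨he, hle⟩]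
  exact (Classical.choose_spec (OrderedGroupoid.og3 x e he hle).exists).1

lemma d_res (x : G) {e : G} (he : IsId e) (hle : e ≤ d x) : d (res x e) = e := by
  rw [res, dif_pos ⟨he, hle⟩]
  exact (Classical.choose_spec (OrderedGroupoid.og3 x e he hle).exists).2

lemma eq_res {x e z : G} (he : IsId e) (hle : e ≤ d x) (hz : z ≤ x) (hd : d z = e) :
    z = res x e :=
  (OrderedGroupoid.og3 x e he hle).unique ⟨hz, hd⟩ ⟨res_le x he hle, d_res x he hle⟩

lemma cores_le {e : G} (x : G) (he : IsId e) (hle : e ≤ r x) : cores e x ≤ x := by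
  simpa only [cores, inv_inv'] using
    OrderedGroupoid.og1 _ _ (res_le (inv x) he (by rwa [d_inv]))

lemma r_cores {e : G} (x : G) (he : IsId e) (hle : e ≤ r x) : r (cores e x) = e := by
  rw [cores, r_inv, d_res _ he (by rwa [d_inv])]

lemma eq_cores {e x z : G} (he : IsId e) (hle : e ≤ r x) (hz : z ≤ x) (hr : r z = e) :
    z = cores e x := by
  have h : inv z = res (inv x) e :=
    eq_res he (by rwa [d_inv]) (OrderedGroupoid.og1 _ _ hz) (by rwa [d_inv])
  rw [cores, ← h, inv_inv']

lemma le_of_d_le {y a b : G} (ha : a ≤ y) (hb : b ≤ y) (hd : d a ≤ d b) : a ≤ b := by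
  have hdy : d a ≤ d y := hd.trans (d_mono hb)
  have hres : res b (d a) ≤ b := res_le b (isId_d a) hd
  calc a = res y (d a) := eq_res (isId_d a) hdy ha rfl
    _ = res b (d a) := (eq_res (isId_d a) hdy (hres.trans hb) (d_res b (isId_d a) hd)).symm
    _ ≤ b := hres

lemma le_of_r_le {y a b : G} (ha : a ≤ y) (hb : b ≤ y) (hr : r a ≤ r b) : a ≤ b := by
  simpa only [inv_inv'] using OrderedGroupoid.og1 _ _ <|
    le_of_d_le (OrderedGroupoid.og1 _ _ ha) (OrderedGroupoid.og1 _ _ hb) (by rwa [d_inv, d_inv])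

lemma res_res {x e f : G} (he : IsId e) (hf : IsId f) (hfe : f ≤ e) (hed : e ≤ d x) :
    res (res x e) f = res x f := by
  have hfd : f ≤ d (res x e) := by rwa [d_res x he hed]
  exact eq_res hf (hfe.trans hed) ((res_le _ hf hfd).trans (res_le x he hed)) (d_res _ hf hfd)

lemma cores_cores {x e f : G} (he : IsId e) (hf : IsId f) (hfe : f ≤ e) (her : e ≤ r x) :
    cores f (cores e x) = cores f x := by
  have hfr : f ≤ r (cores e x) := by rwa [r_cores x he her]
  exact eq_cores hf (hfe.trans her) ((cores_le _ hf hfr).trans (cores_le x he her))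
    (r_cores _ hf hfr)

lemma res_mul {u v e : G} (huv : d u = r v) (he : IsId e) (hev : e ≤ d v) :
    res (mul u v) e = mul (res u (r (res v e))) (res v e) := by
  have hv : res v e ≤ v := res_le v he hev
  have hru : r (res v e) ≤ d u := huv ▸ r_mono hv
  have hdu : d (res u (r (res v e))) = r (res v e) := d_res u (isId_r _) hru
  refine (eq_res he (by rwa [d_mul u v huv]) ?_ ?_).symm
  · exact OrderedGroupoid.og2 _ _ _ _ (res_le u (isId_r _) hru) hv hdu huv
  · rw [d_mul _ _ hdu, d_res v he hev]

lemma cores_mul {u v e : G} (huv : d u = r v) (he : IsId e) (heu : e ≤ r u) :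
    cores e (mul u v) = mul (cores e u) (cores (d (cores e u)) v) := by
  have hu : cores e u ≤ u := cores_le u he heu
  have hdv : d (cores e u) ≤ r v := huv ▸ d_mono hu
  have hrv : r (cores (d (cores e u)) v) = d (cores e u) := r_cores v (isId_d _) hdv
  refine (eq_cores he (by rwa [r_mul u v huv]) ?_ ?_).symm
  · exact OrderedGroupoid.og2 _ _ _ _ hu (cores_le v (isId_d _) hdv) hrv.symm huv
  · rw [r_mul _ _ hrv.symm, r_cores u he heu]

section Pseudo

variable {x y e : G} (h : IsMeetId e (d x) (r y))
include h

lemma pseudo_eq : pseudo x y = mul (res x e) (cores e y) := by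
  have hxy : PsDefined x y := ⟨e, h⟩
  rw [pseudo, dif_pos hxy, (Classical.choose_spec hxy).unique h]

lemma d_res_eq_r_cores : d (res x e) = r (cores e y) := by
  rw [d_res x h.1 h.2.1, r_cores y h.1 h.2.2.1]

lemma r_pseudo : r (pseudo x y) = r (res x e) := by
  rw [pseudo_eq h, r_mul _ _ (d_res_eq_r_cores h)]

lemma d_pseudo : d (pseudo x y) = d (cores e y) := by
  rw [pseudo_eq h, d_mul _ _ (d_res_eq_r_cores h)]

lemma cores_pseudo {f : G} (hf : IsId f) (hfr : f ≤ r (pseudo x y)) :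
    cores f (pseudo x y) =
      mul (cores f (res x e)) (cores (d (cores f (res x e))) y) := by
  have hfr' : f ≤ r (res x e) := r_pseudo h ▸ hfr
  have hde : d (cores f (res x e)) ≤ e := by
    simpa only [d_res x h.1 h.2.1] using d_mono (cores_le _ hf hfr')
  rw [pseudo_eq h, cores_mul (d_res_eq_r_cores h) hf hfr',
    cores_cores h.1 (isId_d _) hde h.2.2.1]

lemma res_pseudo {f : G} (hf : IsId f) (hfd : f ≤ d (pseudo x y)) :
    res (pseudo x y) f = mul (res x (r (res (cores e y) f))) (res (cores e y) f) := by
  have hfd' : f ≤ d (cores e y) := d_pseudo h ▸ hfd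
  have hre : r (res (cores e y) f) ≤ e := by
    simpa only [r_cores y h.1 h.2.2.1] using r_mono (res_le _ hf hfd')
  rw [pseudo_eq h, res_mul (d_res_eq_r_cores h) hf hfd', res_res h.1 (isId_r _) hre h.2.1]

end Pseudo

lemma cores_res_eq_res_cores {x y z e₁ e₂ e₃ e₄ : G}
    (h₁ : IsMeetId e₁ (d y) (r z)) (h₂ : IsMeetId e₂ (d x) (r (pseudo y z)))
    (h₃ : IsMeetId e₃ (d x) (r y)) (h₄ : IsMeetId e₄ (d (pseudo x y)) (r z)) :
    cores e₂ (res y e₁) = res (cores e₃ y) e₄ := by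
  have hr_yz : r (pseudo y z) = r (res y e₁) := r_pseudo h₁
  have hd_xy : d (pseudo x y) = d (cores e₃ y) := d_pseudo h₃
  obtain ⟨he₁, he₁y, he₁z, he₁_max⟩ := h₁
  obtain ⟨he₂, he₂x, he₂yz, he₂_max⟩ := h₂
  obtain ⟨he₃, he₃x, he₃y, he₃_max⟩ := h₃
  obtain ⟨he₄, he₄xy, he₄z, he₄_max⟩ := h₄
  have he₂r : e₂ ≤ r (res y e₁) := hr_yz ▸ he₂yz
  have he₄d : e₄ ≤ d (cores e₃ y) := hd_xy ▸ he₄xy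
  set m := cores e₂ (res y e₁)
  set m' := res (cores e₃ y) e₄
  have hm_res : m ≤ res y e₁ := cores_le _ he₂ he₂r
  have hm_y : m ≤ y := hm_res.trans (res_le y he₁ he₁y)
  have hm'_cores : m' ≤ cores e₃ y := res_le _ he₄ he₄d
  have hm'_y : m' ≤ y := hm'_cores.trans (cores_le y he₃ he₃y)
  have hm_le : m ≤ m' := by
    have hm_cores : m ≤ cores e₃ y := le_of_r_le hm_y (cores_le y he₃ he₃y) <| by
      rw [r_cores _ he₂ he₂r, r_cores y he₃ he₃y]
      exact he₃_max e₂ he₂ he₂x (he₂r.trans (r_mono (res_le y he₁ he₁y)))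
    have hdm : d m ≤ e₁ := d_res y he₁ he₁y ▸ d_mono hm_res
    refine le_of_d_le hm_y hm'_y ?_
    rw [d_res _ he₄ he₄d]
    exact he₄_max _ (isId_d m) (hd_xy ▸ d_mono hm_cores) (hdm.trans he₁z)
  have hm'_le : m' ≤ m := by
    have hm'_res : m' ≤ res y e₁ := le_of_d_le hm'_y (res_le y he₁ he₁y) <| by
      rw [d_res _ he₄ he₄d, d_res y he₁ he₁y]
      exact he₁_max e₄ he₄ (he₄d.trans (d_mono (cores_le y he₃ he₃y))) he₄z
    have hrm' : r m' ≤ e₃ := r_cores y he₃ he₃y ▸ r_mono hm'_cores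
    refine le_of_r_le hm'_y hm_y ?_
    rw [r_cores _ he₂ he₂r]
    exact he₂_max _ (isId_r m') (hrm'.trans he₃x) (hr_yz ▸ r_mono hm'_res)
  exact le_antisymm hm_le hm'_le

end Ordered

theorem stmt15 {G : Type*} [Groupoid' G] [PartialOrder G] [OrderedGroupoid G]
    (x y z : G)
    (h1 : PsDefined y z) (h2 : PsDefined x (pseudo y z))
    (h3 : PsDefined x y) (h4 : PsDefined (pseudo x y) z) :
    pseudo x (pseudo y z) = pseudo (pseudo x y) z := by
  obtain ⟨e₁, h₁⟩ := h1
  obtain ⟨e₂, h₂⟩ := h2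
  obtain ⟨e₃, h₃⟩ := h3
  obtain ⟨e₄, h₄⟩ := h4
  have hm := cores_res_eq_res_cores h₁ h₂ h₃ h₄
  have he₂r : e₂ ≤ r (res y e₁) := r_pseudo h₁ ▸ h₂.2.2.1
  have he₄d : e₄ ≤ d (cores e₃ y) := d_pseudo h₃ ▸ h₄.2.1
  have hdm : d (cores e₂ (res y e₁)) = e₄ := by rw [hm, d_res _ h₄.1 he₄d]
  have hrm : r (res (cores e₃ y) e₄) = e₂ := by rw [← hm, r_cores _ h₂.1 he₂r]
  rw [pseudo_eq h₂, pseudo_eq h₄, cores_pseudo h₁ h₂.1 h₂.2.2.1, res_pseudo h₃ h₄.1 h₄.2.1,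
    hdm, hrm, hm]
  exact (mul_assoc _ _ _ (by rw [d_res x h₂.1 h₂.2.1, hrm])
    (by rw [d_res _ h₄.1 he₄d, r_cores z h₄.1 h₄.2.2.1])).symm
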